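/- SWU is an upper bound on utility of all super-sequences: for any sequence t and any extension t' = t ⋄ w (w possibly empty), u(t', D) ≤ SWU(t, D), where SWU(t, D) = Σ_{S∈D, t⊑S} u(S). -/

import Mathlib

open scoped BigOperators

attribute [local instance] Classical.propDecidable

noncomputable section

abbrev Item := ℕ
abbrev QItemset := Item →₀ ℝ
abbrev QSeq := List QItemset
abbrev Pattern := List (Finset Item)
abbrev DB := Finset QSeq

/-- All item utilities of `S` are nonnegative. -/
def NonNegS (S : QSeq) : Prop := ∀ E ∈ S, ∀ i : Item, 0 ≤ E i

/-- Utility of an itemset `e` inside a q-itemset `E`. -/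
def itemsetUtil (e : Finset Item) (E : QItemset) : ℝ := ∑ i ∈ e, E i

/-- Total utility `u(S)` of a q-sequence. -/
def seqUtil (S : QSeq) : ℝ := (S.map fun E => ∑ i ∈ E.support, E i).sum

/-- `js` is the (0-based) position list of an instance of pattern `t` in `S`. -/
def IsInstance (t : Pattern) (S : QSeq) (js : List ℕ) : Prop :=
  js.length = t.length ∧ js.Pairwise (· < ·) ∧ (∀ j ∈ js, j < S.length) ∧
    ∀ p ∈ js.zip t, p.2 ⊆ (S.getD p.1 0).support

/-- Utility of the instance of `t` at positions `js` in `S`. -/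
def instUtil (t : Pattern) (S : QSeq) (js : List ℕ) : ℝ :=
  ((js.zip t).map fun p => itemsetUtil p.2 (S.getD p.1 0)).sum

/-- `t ⊑ S`. -/
def Contains (t : Pattern) (S : QSeq) : Prop := ∃ js, IsInstance t S js

/-- `u(t,S)`: maximum instance utility of `t` in `S`. -/
def patUtilS (t : Pattern) (S : QSeq) : ℝ :=
  sSup {x | ∃ js, IsInstance t S js ∧ x = instUtil t S js}

/-- `u(t,D)`. -/
def patUtilD (t : Pattern) (D : DB) : ℝ :=
  ∑ S ∈ D, if Contains t S then patUtilS t S else 0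

/-- `p` is an extension position of `t` in `S`. -/
def IsExtPos (t : Pattern) (S : QSeq) (p : ℕ) : Prop :=
  ∃ js, IsInstance t S js ∧ js.getLast? = some p

/-- `u(t,p,S)`: maximum instance utility among instances with extension position `p`. -/
def patUtilP (t : Pattern) (S : QSeq) (p : ℕ) : ℝ :=
  sSup {x | ∃ js, IsInstance t S js ∧ js.getLast? = some p ∧ x = instUtil t S js}

/-- The utilities of the items of `S`, flattened in order (items within an
itemset sorted alphabetically). -/
def flatUtils (S : QSeq) : List ℝ :=
  (S.map fun E => (E.support.sort (· ≤ ·)).map fun i => E i).flatten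

/-- `u(S/_m)`: utility of the remaining q-sequence after (1-based) flattened index `m`. -/
def remUtil (S : QSeq) (m : ℕ) : ℝ := ((flatUtils S).drop m).sum

/-- The extension item of a pattern: the last item of its last itemset. -/
def extItem (t : Pattern) : Item := WithBot.unbotD 0 (t.getLastD ∅).max

/-- 1-based flattened index of item `i` placed in itemset number `p` of `S`. -/
def flatIdx (S : QSeq) (p : ℕ) (i : Item) : ℕ :=
  ((S.take p).map fun E => E.support.card).sum +
    ((S.getD p 0).support.sort (· ≤ ·)).idxOf i + 1

/-- `I(t,p)`: flattened index of the extension item of `t` at extension position `p`. -/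
def extIdx (t : Pattern) (S : QSeq) (p : ℕ) : ℕ := flatIdx S p (extItem t)

/-- `PEU(t,p,S)`. -/
def peuP (t : Pattern) (S : QSeq) (p : ℕ) : ℝ :=
  if 0 ≤ remUtil S (extIdx t S p) then patUtilP t S p + remUtil S (extIdx t S p) else 0

/-- `PEU(t,S)`; by convention `PEU(⟨⟩,S) = u(S)`. -/
def peu (t : Pattern) (S : QSeq) : ℝ :=
  if t = [] then seqUtil S
  else sSup {x | ∃ p, IsExtPos t S p ∧ x = peuP t S p}

/-- `PEU(t,D)`. -/
def peuD (t : Pattern) (D : DB) : ℝ :=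
  ∑ S ∈ D, if Contains t S then peu t S else 0

/-- S-Extension: `t ⋄ₛ w`. -/
def sExt (t w : Pattern) : Pattern := t ++ w

/-- I-Extension: `t ⋄ᵢ w`. -/
def iExt (t w : Pattern) : Pattern :=
  t.dropLast ++ [t.getLastD ∅ ∪ w.headD ∅] ++ w.tail

/-- Precondition for I-Extension: every item of the last itemset of `t`
precedes every item of the first itemset of `w`. -/
def IExtOK (t w : Pattern) : Prop :=
  t ≠ [] ∧ w ≠ [] ∧ ∀ i ∈ t.getLastD ∅, ∀ i' ∈ w.headD ∅, i < i'

/-- `t'` is an extension of `t` by a nonempty sequence `w` (I- or S-Extension). -/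
def IsExt (t t' : Pattern) : Prop :=
  ∃ w, w ≠ [] ∧ (t' = sExt t w ∨ (IExtOK t w ∧ t' = iExt t w))

/-- `t' = t ⋄ w` with `w` possibly empty. -/
def IsExtOrEq (t t' : Pattern) : Prop := t' = t ∨ IsExt t t'

/-- `t = tp ⋄ i`, a one-item extension. -/
def IsOneItemExt (tp t : Pattern) (i : Item) : Prop :=
  t = sExt tp [{i}] ∨ (IExtOK tp [{i}] ∧ t = iExt tp [{i}])

/-- `RSU(t,S)` where `tp` is the one-item-shorter prefix of `t`. -/
def rsuS (tp t : Pattern) (S : QSeq) : ℝ :=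
  if Contains t S then peu tp S else 0

/-- `RSU(t,D)`. -/
def rsuD (tp t : Pattern) (D : DB) : ℝ := ∑ S ∈ D, rsuS tp t S

/-- First (smallest) extension position of `t` in `S`. -/
def firstExtPos (t : Pattern) (S : QSeq) : ℕ := sInf {p | IsExtPos t S p}

/-- `TRSU(t,S)` where `tp` is the one-item-shorter prefix of `t`. -/
def trsuS (tp t : Pattern) (S : QSeq) : ℝ :=
  if Contains t S then
    if peu tp S = patUtilP tp S (firstExtPos tp S)
        + remUtil S (extIdx tp S (firstExtPos tp S)) then
      peu tp S -
        (remUtil S (extIdx tp S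
            (sSup {p | IsExtPos tp S p ∧ p ≤ firstExtPos t S})) -
         remUtil S (extIdx t S (firstExtPos t S) - 1))
    else rsuS tp t S
  else 0

/-- `TRSU(t,D)`. -/
def trsuD (tp t : Pattern) (D : DB) : ℝ := ∑ S ∈ D, trsuS tp t S

/-- `SWU(t,D)`. -/
def swu (t : Pattern) (D : DB) : ℝ :=
  ∑ S ∈ D, if Contains t S then seqUtil S else 0

/-- Pattern-level containment `t ⊑ t'`. -/
def PatSub (t t' : Pattern) : Prop :=
  ∃ js : List ℕ, js.length = t.length ∧ js.Pairwise (· < ·) ∧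
    (∀ j ∈ js, j < t'.length) ∧ ∀ p ∈ js.zip t, p.2 ⊆ t'.getD p.1 ∅

/-! An instance of `t ⋄ w` in `S`, cut down to its first `|t|` positions (and, for an
I-Extension, to the old items of the merged itemset), is an instance of `t`; so every
sequence counted in `u(t ⋄ w, D)` is counted in `SWU(t, D)`. There, with nonnegative
utilities, each instance occupies distinct itemsets of `S` and so has utility at most `u(S)`. -/

theorem List.Forall₂.trans_of_imp {α β γ : Type*} {R : α → β → Prop} {P : β → γ → Prop}
    {Q : α → γ → Prop} (h : ∀ a b c, R a b → P b c → Q a c) :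
    ∀ {l₁ : List α} {l₂ : List β} {l₃ : List γ},
      List.Forall₂ R l₁ l₂ → List.Forall₂ P l₂ l₃ → List.Forall₂ Q l₁ l₃
  | _, _, _, .nil, .nil => .nil
  | _, _, _, .cons hab hl, .cons hbc hl' => .cons (h _ _ _ hab hbc) (trans_of_imp h hl hl')

theorem List.sum_map_range_getD {α M : Type*} [AddCommMonoid M] (l : List α) (d : α)
    (f : α → M) : (l.map f).sum = ∑ j ∈ Finset.range l.length, f (l.getD j d) := by
  induction l with
  | nil => simp
  | cons a l ih => simp [Finset.sum_range_succ', ih, add_comm]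

theorem List.sum_map_getD_le_sum_map {α M : Type*} [AddCommMonoid M] [PartialOrder M]
    [IsOrderedAddMonoid M] (l : List α) (d : α) (f : α → M) (hf : ∀ a ∈ l, 0 ≤ f a)
    {js : List ℕ} (hjs : js.Nodup) (hbd : ∀ j ∈ js, j < l.length) :
    (js.map fun j => f (l.getD j d)).sum ≤ (l.map f).sum := by
  rw [← List.sum_toFinset _ hjs, l.sum_map_range_getD d]
  refine Finset.sum_le_sum_of_subset_of_nonneg (fun j hj => ?_) (fun j hj _ => ?_)
  · exact Finset.mem_range.2 (hbd j (List.mem_toFinset.1 hj))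
  · rw [List.getD_eq_getElem _ _ (Finset.mem_range.1 hj)]
    exact hf _ (List.getElem_mem _)

theorem isInstance_iff {t : Pattern} {S : QSeq} {js : List ℕ} :
    IsInstance t S js ↔ js.Pairwise (· < ·) ∧ (∀ j ∈ js, j < S.length) ∧
      List.Forall₂ (fun j e => e ⊆ (S.getD j 0).support) js t := by
  simp only [IsInstance, List.forall₂_iff_zip, Prod.forall]
  tauto

theorem Contains.of_forall₂_subset_take {t t' : Pattern} {S : QSeq}
    (h : List.Forall₂ (· ⊆ ·) t (t'.take t.length)) (hc : Contains t' S) : Contains t S := by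
  obtain ⟨js, hinst⟩ := hc
  obtain ⟨hlt, hbd, hsub⟩ := isInstance_iff.1 hinst
  refine ⟨js.take t.length, isInstance_iff.2 ⟨hlt.sublist (List.take_sublist _ _),
    fun j hj => hbd j (List.mem_of_mem_take hj), ?_⟩⟩
  exact (List.forall₂_take t.length hsub).trans_of_imp
    (fun _ _ _ hsupp hsub' => hsub'.trans hsupp) h.flip

theorem forall₂_subset_take_iExt {t : Pattern} (w : Pattern) (ht : t ≠ []) :
    List.Forall₂ (· ⊆ ·) t ((iExt t w).take t.length) := by
  have hlen : t.length = t.dropLast.length + 1 := by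
    rw [List.length_dropLast]; have := List.length_pos_iff.2 ht; omega
  have htake : (iExt t w).take t.length = t.dropLast ++ [t.getLastD ∅ ∪ w.headD ∅] := by
    rw [hlen, iExt, List.take_append_of_le_length (by simp), List.take_of_length_le (by simp)]
  rw [htake]
  conv_lhs => rw [← List.dropLast_append_getLast ht]
  rw [List.getLastD_eq_getLast?, List.getLast?_eq_some_getLast ht]
  exact List.rel_append (List.forall₂_refl _) (.cons Finset.subset_union_left .nil)

theorem Contains.of_isExtOrEq {t t' : Pattern} {S : QSeq} (hext : IsExtOrEq t t')
    (hc : Contains t' S) : Contains t S := by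
  rcases hext with rfl | ⟨w, -, rfl | ⟨hok, rfl⟩⟩
  · exact hc
  · refine hc.of_forall₂_subset_take ?_
    rw [sExt, List.take_left' rfl]
    exact List.forall₂_refl _
  · exact hc.of_forall₂_subset_take (forall₂_subset_take_iExt w hok.1)

theorem NonNegS.getD_nonneg {S : QSeq} (h : NonNegS S) (j : ℕ) (i : Item) :
    0 ≤ S.getD j 0 i := by
  by_cases hj : j < S.length
  · rw [List.getD_eq_getElem _ _ hj]; exact h _ (List.getElem_mem hj) i
  · rw [List.getD_eq_default _ _ (not_lt.1 hj)]; simp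

theorem itemsetUtil_le_of_subset {e e' : Finset Item} {E : QItemset} (h : e ⊆ e')
    (hE : ∀ i, 0 ≤ E i) : itemsetUtil e E ≤ itemsetUtil e' E :=
  Finset.sum_le_sum_of_subset_of_nonneg h fun i _ _ => hE i

theorem NonNegS.itemsetUtil_support_nonneg {S : QSeq} (h : NonNegS S) {E : QItemset}
    (hE : E ∈ S) : 0 ≤ itemsetUtil E.support E :=
  Finset.sum_nonneg fun i _ => h E hE i

theorem seqUtil_nonneg {S : QSeq} (h : NonNegS S) : 0 ≤ seqUtil S :=
  List.sum_nonneg <| List.forall_mem_map.2 fun _ => h.itemsetUtil_support_nonneg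

theorem instUtil_le_seqUtil {t : Pattern} {S : QSeq} {js : List ℕ} (h : NonNegS S)
    (hinst : IsInstance t S js) : instUtil t S js ≤ seqUtil S := by
  obtain ⟨hlen, hlt, hbd, hsub⟩ := hinst
  let total : QItemset → ℝ := fun E => itemsetUtil E.support E
  calc instUtil t S js ≤ ((js.zip t).map fun p => total (S.getD p.1 0)).sum :=
        List.sum_le_sum fun p hp => itemsetUtil_le_of_subset (hsub p hp) (h.getD_nonneg p.1)
    _ = (js.map fun j => total (S.getD j 0)).sum := by
        conv_rhs => rw [← List.map_fst_zip hlen.le, List.map_map]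
        rfl
    _ ≤ (S.map total).sum :=
        S.sum_map_getD_le_sum_map 0 total (fun _ => h.itemsetUtil_support_nonneg) hlt.nodup hbd

theorem patUtilS_le_seqUtil {t : Pattern} {S : QSeq} (h : NonNegS S) (hc : Contains t S) :
    patUtilS t S ≤ seqUtil S := by
  obtain ⟨js, hinst⟩ := hc
  refine csSup_le ⟨_, js, hinst, rfl⟩ ?_
  rintro x ⟨js', hinst', rfl⟩
  exact instUtil_le_seqUtil h hinst'

/-- SWU is an upper bound on the utility of all super-sequences:
for any extension `t' = t ⋄ w` (`w` possibly empty), `u(t',D) ≤ SWU(t,D)`. -/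
theorem patUtilD_le_swu (D : DB) (hnn : ∀ S ∈ D, NonNegS S)
    (t t' : Pattern) (hext : IsExtOrEq t t') :
    patUtilD t' D ≤ swu t D := by
  refine Finset.sum_le_sum fun S hS => ?_
  by_cases hc' : Contains t' S
  · rw [if_pos hc', if_pos (hc'.of_isExtOrEq hext)]
    exact patUtilS_le_seqUtil (hnn S hS) hc'
  · rw [if_neg hc']
    split_ifs
    exacts [seqUtil_nonneg (hnn S hS), le_rfl]
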